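/- (Contraction estimates on iterates of a one-dimensional parabolic map, Lemma 4.3.) Let R be analytic in a neighbourhood of the origin of the form R(x) = x − ax^N + O(|x|^{N+1}) with a > 0 and N ≥ 2 an integer. For 0 < η < a define ℛ_η : [0,∞) → ℝ by ℛ_η(s) = s/[1 + (a−η)(N−1)s^{N−1}]^{α} with α = 1/(N−1). Then for any 0 < η < a there exist β, ρ > 0 such that R maps the sector S(β,ρ) into itself and, for every x ∈ S(β,ρ) and every integer k ≥ 0, its k-th iterate satisfies |R^k(x)| ≤ ℛ_η^k(|x|) = |x|/[1 + k(a−η)(N−1)|x|^{N−1}]^{α}. -/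

import Mathlib

/-!
Write `R x = x * w` with `w = 1 - a x^(N-1) + O(|x|^N)`. On a thin sector `x^(N-1)` stays close
to the positive real axis, so `|w| ≤ 1 - (a - η)|x|^(N-1)`; moreover `arg w` is small and, as
soon as `|arg x|` exceeds a quarter of the opening, its sign is opposite to that of `arg x`, so
the sector is invariant. The one-step bound `|R x| ≤ s (1 - (a - η) s^(N-1))`, `s = |x|`, is
dominated by the model map `ℛ_η`, which is monotone and is the time-one map of the flow of
`ṡ = -(a - η) s^N`; hence its iterates are explicit and dominate those of `|R|`.
-/

open Complex Filter

noncomputable section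

def Sector (β ρ : ℝ) : Set ℂ :=
  {z : ℂ | 0 < ‖z‖ ∧ ‖z‖ < ρ ∧ |Complex.arg z| < β / 2}

open Set Topology
open scoped Real

/-- `ℛ_η` is `parabolicModel (N - 1) ((a - η) * (N - 1))`. -/
def parabolicModel (m : ℕ) (c s : ℝ) : ℝ := s / (1 + c * s ^ m) ^ ((1 : ℝ) / m)

section ParabolicModel

variable {m : ℕ} {c s : ℝ}

lemma parabolicModel_nonneg (hc : 0 ≤ c) (hs : 0 ≤ s) : 0 ≤ parabolicModel m c s := by
  unfold parabolicModel; positivity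

lemma parabolicModel_pow (hm : m ≠ 0) (hc : 0 ≤ c) (hs : 0 ≤ s) :
    parabolicModel m c s ^ m = s ^ m / (1 + c * s ^ m) := by
  rw [parabolicModel, div_pow, one_div, Real.rpow_inv_natCast_pow (by positivity) hm]

lemma parabolicModel_monotoneOn (hm : m ≠ 0) (hc : 0 ≤ c) :
    MonotoneOn (parabolicModel m c) (Ici 0) := by
  intro s (hs : 0 ≤ s) t (ht : 0 ≤ t) hst
  rw [← pow_le_pow_iff_left₀ (parabolicModel_nonneg hc hs) (parabolicModel_nonneg hc ht) hm,
    parabolicModel_pow hm hc hs, parabolicModel_pow hm hc ht,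
    div_le_div_iff₀ (by positivity) (by positivity)]
  nlinarith [pow_le_pow_left₀ hs hst m]

lemma parabolicModel_iterate (hm : m ≠ 0) (hc : 0 ≤ c) (hs : 0 ≤ s) (k : ℕ) :
    (parabolicModel m c)^[k] s = s / (1 + k * c * s ^ m) ^ ((1 : ℝ) / m) := by
  induction k with
  | zero => simp
  | succ k ih =>
    set D := 1 + k * c * s ^ m
    have hD : 0 < D := by positivity
    have hD' : 0 < D + c * s ^ m := by positivity
    have hstep : 1 + c * (s ^ m / D) = (D + c * s ^ m) / D := by field_simp
    have hpow : (s / D ^ ((1 : ℝ) / m)) ^ m = s ^ m / D := by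
      rw [div_pow, one_div, Real.rpow_inv_natCast_pow hD.le hm]
    rw [Function.iterate_succ_apply', ih, parabolicModel, hpow, hstep,
      Real.div_rpow hD'.le hD.le, div_div_div_cancel_right₀ (by positivity)]
    congr 2
    simp only [D]
    push_cast
    ring

lemma mul_one_sub_le_parabolicModel (hm : m ≠ 0) {κ : ℝ} (hκ : 0 ≤ κ) (hs : 0 ≤ s) :
    s * (1 - κ * s ^ m) ≤ parabolicModel m (κ * m) s := by
  have hu : 0 ≤ κ * s ^ m := by positivity
  have hroot : (1 + κ * m * s ^ m) ^ ((1 : ℝ) / m) ≤ 1 + κ * s ^ m := by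
    have hm' : (1 : ℝ) ≤ m := by exact_mod_cast Nat.one_le_iff_ne_zero.2 hm
    have hbern := rpow_one_add_le_one_add_mul_self (s := κ * m * s ^ m) (p := 1 / m)
      (by linarith [show 0 ≤ κ * m * s ^ m by positivity]) (by positivity)
      (div_le_one_of_le₀ hm' (by positivity))
    rwa [show 1 / (m : ℝ) * (κ * m * s ^ m) = κ * s ^ m by field_simp] at hbern
  calc s * (1 - κ * s ^ m) ≤ s / (1 + κ * s ^ m) := by
        rw [le_div_iff₀ (by positivity)]
        nlinarith [mul_nonneg hs (mul_nonneg hu hu)]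
    _ ≤ parabolicModel m (κ * m) s :=
        div_le_div_of_nonneg_left hs (by positivity) hroot

end ParabolicModel

lemma apply_iterate_le_iterate {α : Type*} {f : α → α} {g : ℝ → ℝ} {S : Set α} {ν : α → ℝ}
    (hν : ∀ x ∈ S, 0 ≤ ν x) (hf : MapsTo f S S) (hg : MonotoneOn g (Ici 0))
    (hfg : ∀ x ∈ S, ν (f x) ≤ g (ν x)) {x : α} (hx : x ∈ S) (k : ℕ) :
    ν (f^[k] x) ≤ g^[k] (ν x) := by
  induction k with
  | zero => rfl
  | succ k ih =>
    rw [Function.iterate_succ_apply', Function.iterate_succ_apply']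
    have hk := hf.iterate k hx
    exact (hfg _ hk).trans (hg (hν _ hk) ((hν _ hk).trans ih) ih)

lemma eventually_const_mul_le {c d : ℝ} (hd : 0 < d) : ∀ᶠ ρ in 𝓝 (0 : ℝ), c * ρ ≤ d :=
  ((continuous_const_mul c).tendsto' 0 0 (mul_zero c)).eventually (eventually_le_nhds hd)

lemma exists_pos_mul_le_pi_and_sub_le_mul_cos (m : ℕ) (a : ℝ) {δ : ℝ} (hδ : 0 < δ) :
    ∃ β, 0 < β ∧ m * β ≤ π ∧ a - δ ≤ a * Real.cos (m * β / 2) :=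
  (eventually_mem_nhdsWithin.and <| Eventually.filter_mono nhdsWithin_le_nhds <|
    (eventually_const_mul_le Real.pi_pos).and <|
      ((by fun_prop : Continuous fun β : ℝ => a * Real.cos (m * β / 2)).tendsto' 0 a
        (by simp)).eventually (eventually_ge_nhds (by linarith))).exists (f := 𝓝[>] 0)

namespace Complex

lemma norm_div_sub_one_sub_mul_pow_le {m : ℕ} {a C : ℝ} {x y : ℂ} (hx : x ≠ 0)
    (hy : ‖y - (x - a * x ^ (m + 1))‖ ≤ C * ‖x‖ ^ (m + 2)) :
    ‖y / x - (1 - a * x ^ m)‖ ≤ C * ‖x‖ * ‖x‖ ^ m := by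
  have hfactor : y / x - (1 - a * x ^ m) = (y - (x - a * x ^ (m + 1))) / x := by
    field_simp; ring
  rw [hfactor, norm_div, div_le_iff₀ (norm_pos_iff.2 hx)]
  exact hy.trans_eq (by ring)

lemma re_pow (x : ℂ) (m : ℕ) : (x ^ m).re = ‖x‖ ^ m * Real.cos (m * arg x) := by
  conv_lhs => rw [← norm_mul_exp_arg_mul_I x, mul_pow, ← exp_nat_mul, ← ofReal_pow]
  rw [re_ofReal_mul, ← mul_assoc, ← ofReal_natCast, ← ofReal_mul, exp_ofReal_mul_I_re]

lemma im_pow (x : ℂ) (m : ℕ) : (x ^ m).im = ‖x‖ ^ m * Real.sin (m * arg x) := by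
  conv_lhs => rw [← norm_mul_exp_arg_mul_I x, mul_pow, ← exp_nat_mul, ← ofReal_pow]
  rw [im_ofReal_mul, ← mul_assoc, ← ofReal_natCast, ← ofReal_mul, exp_ofReal_mul_I_im]

lemma norm_one_sub_le_of_re {z : ℂ} {δ : ℝ} (hδ : 0 ≤ δ) (hz : ‖z‖ ≤ 1 / 2)
    (hre : ‖z‖ - δ ≤ z.re) : ‖1 - z‖ ≤ 1 - ‖z‖ + 2 * δ := by
  have hsq : ‖1 - z‖ ^ 2 = 1 - 2 * z.re + ‖z‖ ^ 2 := by
    rw [Complex.sq_norm, Complex.sq_norm, normSq_apply, normSq_apply]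
    simp only [sub_re, one_re, sub_im, one_im]
    ring
  refine le_of_pow_le_pow_left₀ two_ne_zero (by linarith) ?_
  rw [hsq]
  nlinarith

lemma norm_le_of_norm_sub_one_sub_mul_pow_le {m : ℕ} {a η ε β : ℝ} {x w : ℂ} (ha : 0 ≤ a)
    (hη : 0 ≤ η) (hmβ : m * β ≤ 2 * π) (hcos : a - η / 4 ≤ a * Real.cos (m * β / 2))
    (hx : |arg x| < β / 2) (hau : a * ‖x‖ ^ m ≤ 1 / 2) (hεη : ε ≤ η / 4)
    (hw : ‖w - (1 - a * x ^ m)‖ ≤ ε * ‖x‖ ^ m) : ‖w‖ ≤ 1 - (a - η) * ‖x‖ ^ m := by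
  set u := ‖x‖ ^ m
  have hu : 0 ≤ u := by positivity
  have hcos_le : Real.cos (m * β / 2) ≤ Real.cos (m * arg x) := by
    rw [← Real.cos_abs (m * arg x)]
    refine Real.cos_le_cos_of_nonneg_of_le_pi (abs_nonneg _) (by linarith) ?_
    rw [abs_mul, Nat.abs_cast]
    nlinarith [abs_nonneg (arg x), (Nat.cast_nonneg m : (0 : ℝ) ≤ m)]
  have hnorm : ‖(a : ℂ) * x ^ m‖ = a * u := by simp [u, ha]
  have hre : ‖(a : ℂ) * x ^ m‖ - η / 4 * u ≤ ((a : ℂ) * x ^ m).re := by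
    rw [hnorm, re_ofReal_mul, re_pow]
    nlinarith [mul_le_mul_of_nonneg_left hcos_le (mul_nonneg ha hu)]
  have hlead := norm_one_sub_le_of_re (by positivity) (hnorm ▸ hau) hre
  calc ‖w‖ = ‖(1 - a * x ^ m) + (w - (1 - a * x ^ m))‖ := by ring_nf
    _ ≤ ‖1 - a * x ^ m‖ + ‖w - (1 - a * x ^ m)‖ := norm_add_le _ _
    _ ≤ 1 - (a - η) * u := by nlinarith [mul_le_mul_of_nonneg_right hεη hu]

lemma arg_sign_of_norm_sub_one_sub_mul_pow_le {m : ℕ} {a ε β : ℝ} {x w : ℂ}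
    (ha : 0 ≤ a) (hmβ : m * β ≤ π) (hεsin : ε ≤ a * Real.sin (m * β / 4))
    (hx : |arg x| < β / 2) (hre : 0 ≤ w.re) (hw : ‖w - (1 - a * x ^ m)‖ ≤ ε * ‖x‖ ^ m) :
    (β / 4 < arg x → arg w ≤ 0) ∧ (arg x < -(β / 4) → 0 ≤ arg w) := by
  set u := ‖x‖ ^ m
  have hu : 0 ≤ u := by positivity
  have him : w.im = (w - (1 - a * x ^ m)).im - a * (u * Real.sin (m * arg x)) := by
    simp only [sub_im, one_im, im_ofReal_mul, im_pow, u]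
    ring
  have hE := abs_le.1 ((abs_im_le_norm _).trans hw)
  have hε := mul_le_mul_of_nonneg_right hεsin hu
  have hsin : ∀ θ, β / 4 < θ → θ < β / 2 → Real.sin (m * β / 4) ≤ Real.sin (m * θ) := by
    intro θ h₁ h₂
    have hm : (0 : ℝ) ≤ m := Nat.cast_nonneg m
    refine Real.sin_le_sin_of_le_of_le_pi_div_two (by nlinarith) (by nlinarith) (by nlinarith)
  obtain ⟨hx₁, hx₂⟩ := abs_lt.1 hx
  constructor
  · intro h
    have := mul_le_mul_of_nonneg_left (hsin _ h hx₂) (mul_nonneg ha hu)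
    rw [arg_of_re_nonneg hre, Real.arcsin_nonpos]
    refine div_nonpos_of_nonpos_of_nonneg ?_ (norm_nonneg w)
    nlinarith
  · intro h
    have := mul_le_mul_of_nonneg_left (hsin (-arg x) (by linarith) (by linarith))
      (mul_nonneg ha hu)
    rw [mul_neg, Real.sin_neg] at this
    rw [arg_nonneg_iff]
    nlinarith

lemma one_sub_le_re_of_norm_sub_one_le {w : ℂ} {r : ℝ} (hw : ‖w - 1‖ ≤ r) : 1 - r ≤ w.re := by
  have := (abs_le.1 ((abs_re_le_norm _).trans hw)).1
  simp only [sub_re, one_re] at this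
  linarith

lemma abs_arg_le_of_norm_sub_one_le {w : ℂ} {r : ℝ} (hr : r ≤ 1 / 2) (hw : ‖w - 1‖ ≤ r) :
    |arg w| ≤ 4 * r := by
  have hre := one_sub_le_re_of_norm_sub_one_le hw
  have him : |w.im| ≤ r := by simpa using (abs_im_le_norm _).trans hw
  have hnorm : 1 / 2 ≤ ‖w‖ := (by linarith : 1 / 2 ≤ w.re).trans (re_le_norm w)
  have hjordan := Real.mul_abs_le_abs_sin (abs_arg_le_pi_div_two_iff.2 (by linarith))
  rw [sin_arg, abs_div, abs_norm, le_div_iff₀ (by linarith),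
    show 2 / π * |arg w| = 2 * (|arg w| / π) by ring] at hjordan
  have hπr : |arg w| ≤ π * r := by
    rw [← div_le_iff₀' Real.pi_pos]
    nlinarith [mul_le_mul_of_nonneg_left hnorm (by positivity : 0 ≤ |arg w| / π)]
  nlinarith [Real.pi_le_four, (abs_nonneg _).trans him]

lemma abs_arg_mul_lt {x w : ℂ} {b : ℝ} (hx : x ≠ 0) (hw : w ≠ 0) (hb : b ≤ π / 2)
    (hxb : |arg x| < b) (hwb : |arg w| < b / 2)
    (hpos : b / 2 < arg x → arg w ≤ 0) (hneg : arg x < -(b / 2) → 0 ≤ arg w) :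
    |arg (x * w)| < b := by
  rw [abs_lt] at hxb hwb
  rw [arg_mul hx hw ⟨by linarith, by linarith⟩, abs_lt]
  by_cases h₁ : b / 2 < arg x
  · have := hpos h₁; constructor <;> linarith
  by_cases h₂ : arg x < -(b / 2)
  · have := hneg h₂; constructor <;> linarith
  constructor <;> linarith

end Complex

theorem apply_mem_sector_and_norm_le {m : ℕ} {a η C β ρ : ℝ} {R : ℂ → ℂ} (hm : 1 ≤ m)
    (ha : 0 < a) (hη : 0 ≤ η) (hηa : η ≤ a)
    (hR : ∀ x ∈ Sector β ρ, ‖R x - (x - a * x ^ (m + 1))‖ ≤ C * ‖x‖ ^ (m + 2))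
    (hmβ : m * β ≤ π) (hcos : a - η / 4 ≤ a * Real.cos (m * β / 2))
    (hρ : ρ ≤ 1) (hβρ : 32 * a * ρ ≤ β) (hCη : C * ρ ≤ η / 4)
    (hCsin : C * ρ ≤ a * Real.sin (m * β / 4)) {x : ℂ} (hx : x ∈ Sector β ρ) :
    R x ∈ Sector β ρ ∧ ‖R x‖ ≤ ‖x‖ * (1 - (a - η) * ‖x‖ ^ m) := by
  obtain ⟨hx0, hxρ, hxarg⟩ := hx
  have hx : x ≠ 0 := norm_pos_iff.1 hx0
  set u := ‖x‖ ^ m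
  have hu : 0 < u := by positivity
  have hus : u ≤ ‖x‖ := pow_le_of_le_one (norm_nonneg x) (by linarith) (by omega)
  have hCx : C * ‖x‖ ≤ C * ρ := mul_le_mul_of_nonneg_left hxρ.le <|
    nonneg_of_mul_nonneg_left ((norm_nonneg _).trans (hR x ⟨hx0, hxρ, hxarg⟩)) (by positivity)
  have hβ : β ≤ π := by
    have : (1 : ℝ) ≤ m := by exact_mod_cast hm
    nlinarith [(abs_nonneg (arg x)).trans_lt hxarg]
  set w := R x / x
  have hRw : R x = x * w := (mul_div_cancel₀ _ hx).symm
  have hw : ‖w - (1 - a * x ^ m)‖ ≤ C * ‖x‖ * u :=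
    Complex.norm_div_sub_one_sub_mul_pow_le hx (hR x ⟨hx0, hxρ, hxarg⟩)
  have hw1 : ‖w - 1‖ ≤ 2 * a * u := by
    have hlead : ‖(a : ℂ) * x ^ m‖ = a * u := by simp [u, ha.le]
    calc ‖w - 1‖ = ‖(w - (1 - a * x ^ m)) - a * x ^ m‖ := by ring_nf
      _ ≤ ‖w - (1 - a * x ^ m)‖ + ‖(a : ℂ) * x ^ m‖ := norm_sub_le _ _
      _ ≤ 2 * a * u := by
        rw [hlead]; nlinarith [mul_le_mul_of_nonneg_right (hCx.trans hCη) hu.le]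
  have hau : 8 * a * u < β / 4 := by nlinarith
  have hwre : 1 / 2 ≤ w.re := by
    linarith [Complex.one_sub_le_re_of_norm_sub_one_le hw1, Real.pi_le_four]
  have hw0 : w ≠ 0 := fun h => by rw [h, zero_re] at hwre; linarith
  have hnorm : ‖w‖ ≤ 1 - (a - η) * u :=
    Complex.norm_le_of_norm_sub_one_sub_mul_pow_le ha.le hη (by linarith [Real.pi_pos]) hcos hxarg
      (by change a * u ≤ 1 / 2; nlinarith [Real.pi_le_four]) (by linarith) hw
  have hsign := Complex.arg_sign_of_norm_sub_one_sub_mul_pow_le ha.le hmβ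
    (hCx.trans hCsin) hxarg (by linarith) hw
  have hargw : |arg w| < β / 2 / 2 := by
    have := Complex.abs_arg_le_of_norm_sub_one_le (by nlinarith [Real.pi_le_four]) hw1
    linarith
  have hRx : ‖R x‖ ≤ ‖x‖ * (1 - (a - η) * u) := by
    rw [hRw, norm_mul]; exact mul_le_mul_of_nonneg_left hnorm (norm_nonneg x)
  refine ⟨⟨norm_pos_iff.2 (hRw ▸ mul_ne_zero hx hw0), hRx.trans_lt ?_, ?_⟩, hRx⟩
  · nlinarith [mul_nonneg (sub_nonneg.2 hηa) hu.le]
  · rw [hRw]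
    exact Complex.abs_arg_mul_lt hx hw0 (by linarith) hxarg hargw
      (fun h => hsign.1 (by linarith)) (fun h => hsign.2 (by linarith))

theorem sector_iterates_parabolic_map_general (N : ℕ) (hN : 2 ≤ N) (a : ℝ) (ha : 0 < a)
    (ρ₀ : ℝ) (hρ₀ : 0 < ρ₀) (R : ℂ → ℂ)
    (hR : ∃ C : ℝ, ∀ x ∈ Metric.ball (0 : ℂ) ρ₀,
      ‖R x - (x - (a : ℂ) * x ^ N)‖ ≤ C * ‖x‖ ^ (N + 1)) :
    ∀ η : ℝ, 0 < η → η < a →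
      ∃ β ρ : ℝ, 0 < β ∧ 0 < ρ ∧ ρ ≤ ρ₀ ∧
        Set.MapsTo R (Sector β ρ) (Sector β ρ) ∧
        ∀ x ∈ Sector β ρ, ∀ k : ℕ,
          ‖R^[k] x‖ ≤
            ‖x‖ /
              (1 + (k : ℝ) * (a - η) * ((N : ℝ) - 1) * ‖x‖ ^ (N - 1)) ^
                ((1 : ℝ) / ((N : ℝ) - 1)) := by
  intro η hη hηa
  obtain ⟨m, rfl⟩ : ∃ m, N = m + 1 := ⟨N - 1, by omega⟩
  obtain ⟨C, hC⟩ := hR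
  obtain ⟨β, hβ, hmβ, hcos⟩ :=
    exists_pos_mul_le_pi_and_sub_le_mul_cos m a (by linarith : 0 < η / 4)
  have hm : (1 : ℝ) ≤ m := by exact_mod_cast (by omega : 1 ≤ m)
  have hsin : 0 < a * Real.sin (m * β / 4) :=
    mul_pos ha (Real.sin_pos_of_pos_of_lt_pi (by positivity) (by linarith [Real.pi_pos]))
  obtain ⟨ρ, hρ, hρρ₀, hρ1, hβρ, hCη, hCsin⟩ : ∃ ρ, 0 < ρ ∧ ρ ≤ ρ₀ ∧ ρ ≤ 1 ∧ 32 * a * ρ ≤ β ∧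
      C * ρ ≤ η / 4 ∧ C * ρ ≤ a * Real.sin (m * β / 4) :=
    (eventually_mem_nhdsWithin.and <| Eventually.filter_mono nhdsWithin_le_nhds <|
      (eventually_le_nhds hρ₀).and <| (eventually_le_nhds one_pos).and <|
        (eventually_const_mul_le hβ).and <| (eventually_const_mul_le (by linarith)).and <|
          eventually_const_mul_le hsin).exists (f := 𝓝[>] 0)
  have hstep : ∀ x ∈ Sector β ρ, R x ∈ Sector β ρ ∧ ‖R x‖ ≤ ‖x‖ * (1 - (a - η) * ‖x‖ ^ m) :=
    fun x => apply_mem_sector_and_norm_le (by omega) ha hη.le hηa.le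
      (fun y hy => hC y (mem_ball_zero_iff.2 (hy.2.1.trans_le hρρ₀))) hmβ hcos hρ1 hβρ hCη hCsin
  refine ⟨β, ρ, hβ, hρ, hρρ₀, fun x hx => (hstep x hx).1, fun x hx k => ?_⟩
  have hc : 0 ≤ (a - η) * m := by nlinarith
  have hiter := apply_iterate_le_iterate (fun y _ => norm_nonneg y) (fun y hy => (hstep y hy).1)
    (parabolicModel_monotoneOn (by omega) hc) (fun y hy => (hstep y hy).2.trans
      (mul_one_sub_le_parabolicModel (by omega) (by linarith) (norm_nonneg y))) hx k
  rw [parabolicModel_iterate (by omega) hc (norm_nonneg x), ← mul_assoc] at hiter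
  simpa using hiter

/-- **Contraction estimates on the iterates of a one-dimensional parabolic map**
(Lemma 4.3 of Baldomá–Fontich–Martín). If `R(x) = x - a x^N + O(|x|^{N+1})` is
analytic near the origin with `a > 0`, then for every `0 < η < a` there are
`β, ρ > 0` such that `R` maps the sector `S(β,ρ)` into itself and
`|R^k(x)| ≤ |x| / (1 + k (a-η)(N-1) |x|^{N-1})^{1/(N-1)}` for all `x ∈ S(β,ρ)`
and all `k ≥ 0`. -/
theorem sector_iterates_parabolic_map (N : ℕ) (hN : 2 ≤ N) (a : ℝ) (ha : 0 < a)
    (ρ₀ : ℝ) (hρ₀ : 0 < ρ₀) (R : ℂ → ℂ)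
    (hRan : AnalyticOnNhd ℂ R (Metric.ball 0 ρ₀))
    (hR : ∃ C : ℝ, ∀ x ∈ Metric.ball (0 : ℂ) ρ₀,
      ‖R x - (x - (a : ℂ) * x ^ N)‖ ≤ C * ‖x‖ ^ (N + 1)) :
    ∀ η : ℝ, 0 < η → η < a →
      ∃ β ρ : ℝ, 0 < β ∧ 0 < ρ ∧ ρ ≤ ρ₀ ∧
        Set.MapsTo R (Sector β ρ) (Sector β ρ) ∧
        ∀ x ∈ Sector β ρ, ∀ k : ℕ,
          ‖R^[k] x‖ ≤
            ‖x‖ /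
              (1 + (k : ℝ) * (a - η) * ((N : ℝ) - 1) * ‖x‖ ^ (N - 1)) ^
                ((1 : ℝ) / ((N : ℝ) - 1)) :=
  sector_iterates_parabolic_map_general N hN a ha ρ₀ hρ₀ R hR
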